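/- In the formal power series ring ℤ[[t, z_1, z_2]], writing z^α = z_1^{m_1} z_2^{m_2} for α = m_1α_1 + m_2α_2 in the positive root lattice of G_2, one has ∏_{α ∈ Φ⁺(G_2)} (1 − t·z^{α})·(1 − z^{α})^{-1} = Σ_{T ∈ 𝒯(∞)} (1 − t)^{seg(T)} · z^{−wt(T)}, where Φ⁺(G_2) = {α_1, α_1+α_2, 2α_1+α_2, 3α_1+α_2, 3α_1+2α_2, α_2} and the right-hand side is a well-defined formal power series because for each monomial only finitely many T ∈ 𝒯(∞) contribute. -/

import Mathlib

open MvPowerSeries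

/-- The variable `t` in `ℤ[[t, z_1, …, z_r]]`. -/
noncomputable def tvar (r : ℕ) : MvPowerSeries (Option (Fin r)) ℤ :=
  MvPowerSeries.X none

/-- The monomial `z^v = z_1^{v 1} ⋯ z_r^{v r}` in `ℤ[[t, z_1, …, z_r]]`. -/
noncomputable def zmon (r : ℕ) (v : Fin r → ℕ) : MvPowerSeries (Option (Fin r)) ℤ :=
  MvPowerSeries.monomial (R := ℤ) (Finsupp.equivFunOnFinite.symm fun o => Option.elim o 0 v) 1

/-- The marginally large tableaux `𝒯(∞)` of type `G_2`, each determined by its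
segment data `(ℓ_{1,2}, ℓ_{1,3}, ℓ_{1,0}, ℓ_{1,3̄}, ℓ_{1,2̄}, ℓ_{1,1̄}, ℓ_{2,3})`
with `ℓ_{1,0} ∈ {0,1}`. -/
structure TabG where
  l12 : ℕ
  l13 : ℕ
  l10 : ℕ
  l13b : ℕ
  l12b : ℕ
  l11b : ℕ
  l23 : ℕ
  l10_le : l10 ≤ 1

/-- The set of positive roots of `G_2`
(`α_1, α_1+α_2, 2α_1+α_2, 3α_1+α_2, 3α_1+2α_2, α_2`), in simple-root
coordinates. -/
def posRootsG : Finset (Fin 2 → ℕ) :=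
  {![1, 0], ![1, 1], ![2, 1], ![3, 1], ![3, 2], ![0, 1]}

/-- `Ξ(T)`, extended by zero to all vectors: `ℓ_{1,2}` at `α_1`, `ℓ_{1,3}` at
`α_1+α_2`, `2ℓ_{1,1̄} + ℓ_{1,0}` at `2α_1+α_2`, `ℓ_{1,3̄}` at `3α_1+α_2`,
`ℓ_{1,2̄}` at `3α_1+2α_2`, and `ℓ_{2,3}` at `α_2`. -/
def XiG (T : TabG) (v : Fin 2 → ℕ) : ℕ :=
  (if v = ![1, 0] then T.l12 else 0) +
    (if v = ![1, 1] then T.l13 else 0) +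
    (if v = ![2, 1] then 2 * T.l11b + T.l10 else 0) +
    (if v = ![3, 1] then T.l13b else 0) +
    (if v = ![3, 2] then T.l12b else 0) +
    (if v = ![0, 1] then T.l23 else 0)

/-- `seg′(T)`: the number of nonzero values among the seven segment data. -/
def segG' (T : TabG) : ℕ :=
  (if T.l12 ≠ 0 then 1 else 0) + (if T.l13 ≠ 0 then 1 else 0) +
    (if T.l10 ≠ 0 then 1 else 0) + (if T.l13b ≠ 0 then 1 else 0) +
    (if T.l12b ≠ 0 then 1 else 0) + (if T.l11b ≠ 0 then 1 else 0) +
    (if T.l23 ≠ 0 then 1 else 0)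

/-- `seg(T) = seg′(T) - 1` if the first row contains both a `0`-segment and a
`1̄`-segment, and `seg(T) = seg′(T)` otherwise. -/
def segG (T : TabG) : ℕ :=
  segG' T - (if T.l10 ≠ 0 ∧ T.l11b ≠ 0 then 1 else 0)

/-- `-wt(T) = Σ_α Ξ(T)(α)·α`, in simple-root coordinates. -/
def negwtG (T : TabG) : Fin 2 → ℕ :=
  ∑ v ∈ posRootsG, XiG T v • v

/-! Each factor expands as `(1 - t x)(1 - x)⁻¹ = 1 + (1 - t)(x + x² + ⋯) = ∑ₖ (1 - t)^{min k 1} xᵏ`,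
so the product over `Φ⁺` is the sum over `k : Φ⁺ → ℕ` of `(1 - t)^{#{α | k α ≠ 0}} z^{∑ k α • α}`.
The map `T ↦ Ξ(T)` is a bijection `𝒯(∞) ≃ (Φ⁺ → ℕ)` carrying `-wt(T)` to `∑ k α • α` and `seg(T)`
to the number of nonzero `k α`: the correction in `seg` when `ℓ_{1,0}` and `ℓ_{1,1̄}` are both
nonzero is exactly because both contribute to the single root `2α_1+α_2`, of which `Ξ(T)`
records `2ℓ_{1,1̄} + ℓ_{1,0}` (so they are its quotient and remainder mod `2`). Coefficientwise
everything is finite, since only `k α ≤ deg e` can contribute to the coefficient of `e`. -/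

open Finset

namespace MvPowerSeries

theorem coeff_prod_congr {σ R ι : Type*} [CommSemiring R] {s : Finset ι}
    {f g : ι → MvPowerSeries σ R} {e : σ →₀ ℕ}
    (h : ∀ i ∈ s, ∀ d ≤ e, coeff d (f i) = coeff d (g i)) :
    coeff e (∏ i ∈ s, f i) = coeff e (∏ i ∈ s, g i) := by
  classical
  rw [coeff_prod, coeff_prod]
  refine sum_congr rfl fun l hl => prod_congr rfl fun i hi => h i hi _ ?_
  rw [← (mem_finsuppAntidiag.1 hl).1]
  exact single_le_sum_of_canonicallyOrdered hi

end MvPowerSeries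

theorem sum_range_one_sub_pow_min_mul_pow_mul_one_sub {A : Type*} [CommRing A] (t x : A)
    (n : ℕ) : (∑ k ∈ range (n + 1), (1 - t) ^ min k 1 * x ^ k) * (1 - x)
      = 1 - t * x - (1 - t) * x ^ (n + 1) := by
  induction n with
  | zero =>
    simp only [zero_add, range_one, sum_singleton, zero_le, inf_of_le_left, pow_zero, mul_one,
      one_mul, pow_one]
    ring
  | succ n ih =>
    rw [sum_range_succ, add_mul, ih, min_eq_right (by omega), pow_one]
    ring

noncomputable def zexp (r : ℕ) : (Fin r → ℕ) →+ (Option (Fin r) →₀ ℕ) where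
  toFun v := Finsupp.equivFunOnFinite.symm fun o => Option.elim o 0 v
  map_zero' := by ext o; cases o <;> rfl
  map_add' a b := by ext o; cases o <;> rfl

section zmon

variable {r : ℕ}

theorem zmon_eq_monomial (v : Fin r → ℕ) : zmon r v = monomial (zexp r v) 1 := rfl

theorem zmon_pow (v : Fin r → ℕ) (k : ℕ) : zmon r v ^ k = zmon r (k • v) := by
  rw [zmon_eq_monomial, zmon_eq_monomial, monomial_pow, one_pow, map_nsmul]

theorem zmon_sum_nsmul {ι : Type*} (s : Finset ι) (k : ι → ℕ) (v : ι → Fin r → ℕ) :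
    zmon r (∑ i ∈ s, k i • v i) = ∏ i ∈ s, zmon r (v i) ^ k i := by
  simp only [zmon_eq_monomial, map_sum, map_nsmul, monomial_pow, one_pow, prod_monomial,
    prod_const_one]

theorem constantCoeff_one_sub_zmon {v : Fin r → ℕ} (hv : v ≠ 0) :
    constantCoeff (1 - zmon r v) = ((1 : ℤˣ) : ℤ) := by
  have : zexp r v ≠ 0 := fun h => hv (funext fun i => DFunLike.congr_fun h (some i))
  rw [map_sub, map_one, zmon_eq_monomial, ← coeff_zero_eq_constantCoeff_apply, coeff_monomial,
    if_neg this.symm, sub_zero, Units.val_one]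

theorem coeff_zmon_mul_eq_zero {w : Fin r → ℕ} {d : Option (Fin r) →₀ ℕ} {i : Fin r}
    (hi : d (some i) < w i) (P : MvPowerSeries (Option (Fin r)) ℤ) :
    coeff d (zmon r w * P) = 0 := by
  rw [zmon_eq_monomial, coeff_monomial_mul, if_neg]
  exact fun h => (h (some i)).not_gt hi

theorem coeff_factor_eq_coeff_sum {v : Fin r → ℕ} (hv : v ≠ 0) {n : ℕ}
    {d : Option (Fin r) →₀ ℕ} (hd : ∀ i, d (some i) ≤ n) :
    coeff d ((1 - tvar r * zmon r v) * invOfUnit (1 - zmon r v) 1)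
      = coeff d (∑ k ∈ range (n + 1), (1 - tvar r) ^ min k 1 * zmon r v ^ k) := by
  set x := zmon r v
  set u := invOfUnit (1 - x) 1
  set S := ∑ k ∈ range (n + 1), (1 - tvar r) ^ min k 1 * x ^ k
  have hu : (1 - x) * u = 1 := mul_invOfUnit _ _ (constantCoeff_one_sub_zmon hv)
  have tail : (1 - tvar r * x) * u = S + zmon r ((n + 1) • v) * ((1 - tvar r) * u) :=
    calc (1 - tvar r * x) * u = (S * (1 - x) + (1 - tvar r) * x ^ (n + 1)) * u := by
          rw [sum_range_one_sub_pow_min_mul_pow_mul_one_sub]; ring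
      _ = S * ((1 - x) * u) + x ^ (n + 1) * ((1 - tvar r) * u) := by ring
      _ = S + zmon r ((n + 1) • v) * ((1 - tvar r) * u) := by rw [hu, mul_one, zmon_pow]
  obtain ⟨i, hi⟩ := Function.ne_iff.1 hv
  rw [tail, map_add, coeff_zmon_mul_eq_zero (i := i), add_zero]
  calc d (some i) ≤ n := hd i
    _ < n + 1 := n.lt_succ_self
    _ ≤ (n + 1) * v i := Nat.le_mul_of_pos_right _ (Nat.pos_of_ne_zero hi)

theorem coeff_prod_factor_eq_tsum {ι : Type*} [Fintype ι] {v : ι → Fin r → ℕ}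
    (hv : ∀ i, v i ≠ 0) (e : Option (Fin r) →₀ ℕ) :
    coeff e (∏ i, (1 - tvar r * zmon r (v i)) * invOfUnit (1 - zmon r (v i)) 1)
      = ∑' k : ι → ℕ, coeff e (∏ i, (1 - tvar r) ^ min (k i) 1 * zmon r (v i) ^ k i) := by
  classical
  set n := e.degree
  have hle : ∀ d ≤ e, ∀ j, d (some j) ≤ n := fun d hd j => (hd _).trans (Finsupp.le_degree _ _)
  rw [coeff_prod_congr fun i _ d hd => coeff_factor_eq_coeff_sum (hv i) (hle d hd),
    prod_univ_sum, map_sum, tsum_eq_sum (s := Fintype.piFinset fun _ => range (n + 1))]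
  intro k hk
  obtain ⟨i, hi⟩ : ∃ i, n < k i := by simpa [Fintype.mem_piFinset] using hk
  obtain ⟨j, hj⟩ := Function.ne_iff.1 (hv i)
  rw [← mul_prod_erase univ _ (mem_univ i), mul_assoc, mul_left_comm, zmon_pow,
    coeff_zmon_mul_eq_zero (i := j)]
  calc e (some j) ≤ n := hle e le_rfl j
    _ < k i := hi
    _ ≤ k i * v i j := Nat.le_mul_of_pos_right _ (Nat.pos_of_ne_zero hj)

end zmon

section G2

@[simp] theorem XiG_alpha1 (T : TabG) : XiG T ![1, 0] = T.l12 := by simp [XiG]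
@[simp] theorem XiG_alpha1_add_alpha2 (T : TabG) : XiG T ![1, 1] = T.l13 := by simp [XiG]
@[simp] theorem XiG_two_alpha1_add_alpha2 (T : TabG) :
    XiG T ![2, 1] = 2 * T.l11b + T.l10 := by simp [XiG]
@[simp] theorem XiG_three_alpha1_add_alpha2 (T : TabG) : XiG T ![3, 1] = T.l13b := by simp [XiG]
@[simp] theorem XiG_three_alpha1_add_two_alpha2 (T : TabG) : XiG T ![3, 2] = T.l12b := by
  simp [XiG]
@[simp] theorem XiG_alpha2 (T : TabG) : XiG T ![0, 1] = T.l23 := by simp [XiG]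

theorem sum_posRootsG {M : Type*} [AddCommMonoid M] (F : (Fin 2 → ℕ) → M) :
    ∑ v ∈ posRootsG, F v
      = F ![1, 0] + (F ![1, 1] + (F ![2, 1] + (F ![3, 1] + (F ![3, 2] + F ![0, 1])))) := by
  simp [posRootsG]

theorem ne_zero_of_mem_posRootsG {v : Fin 2 → ℕ} (hv : v ∈ posRootsG) : v ≠ 0 := by
  revert v hv
  decide

theorem segG_eq_sum (T : TabG) : segG T = ∑ v ∈ posRootsG, min (XiG T v) 1 := by
  have indicator_eq_min (a : ℕ) : (if a ≠ 0 then 1 else 0) = min a 1 := by split_ifs <;> omega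
  have := T.l10_le
  simp only [sum_posRootsG, XiG_alpha1, XiG_alpha1_add_alpha2, XiG_two_alpha1_add_alpha2,
    XiG_three_alpha1_add_alpha2, XiG_three_alpha1_add_two_alpha2, XiG_alpha2, segG, segG',
    indicator_eq_min]
  split_ifs <;> omega

def xiEquiv : TabG ≃ (posRootsG → ℕ) where
  toFun T v := XiG T v
  invFun k :=
    ⟨k ⟨![1, 0], by decide⟩, k ⟨![1, 1], by decide⟩, k ⟨![2, 1], by decide⟩ % 2,
      k ⟨![3, 1], by decide⟩, k ⟨![3, 2], by decide⟩, k ⟨![2, 1], by decide⟩ / 2,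
      k ⟨![0, 1], by decide⟩, by omega⟩
  left_inv T := by
    obtain ⟨_, _, _, _, _, _, _, h⟩ := T
    simp only [XiG_alpha1, XiG_alpha1_add_alpha2, XiG_two_alpha1_add_alpha2,
      XiG_three_alpha1_add_alpha2, XiG_three_alpha1_add_two_alpha2, XiG_alpha2,
      TabG.mk.injEq, true_and, and_true]
    omega
  right_inv k := by
    funext ⟨v, hv⟩
    simp only [posRootsG, mem_insert, mem_singleton] at hv
    rcases hv with rfl | rfl | rfl | rfl | rfl | rfl <;> simp
    omega

theorem one_sub_tvar_pow_segG_mul_zmon_negwtG (T : TabG) :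
    (1 - tvar 2) ^ segG T * zmon 2 (negwtG T)
      = ∏ v : posRootsG, (1 - tvar 2) ^ min (xiEquiv T v) 1 * zmon 2 v ^ xiEquiv T v := by
  rw [segG_eq_sum, negwtG, zmon_sum_nsmul, ← prod_pow_eq_pow_sum, ← prod_mul_distrib,
    ← prod_coe_sort]
  rfl

end G2

/-- the Gindikin–Karpelevich formula as a sum over the marginally
large tableaux `𝒯(∞)` of type `G_2`, stated coefficientwise in
`ℤ[[t, z_1, z_2]]`. -/
theorem stmt10 :
    ∀ e : Option (Fin 2) →₀ ℕ,
      MvPowerSeries.coeff (R := ℤ) e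
        (∏ v ∈ posRootsG, (1 - tvar 2 * zmon 2 v) *
          MvPowerSeries.invOfUnit (1 - zmon 2 v) 1)
      = ∑' T : TabG,
          MvPowerSeries.coeff (R := ℤ) e
            ((1 - tvar 2) ^ segG T * zmon 2 (negwtG T)) := by
  intro e
  rw [← prod_coe_sort, coeff_prod_factor_eq_tsum (fun v => ne_zero_of_mem_posRootsG v.2),
    ← xiEquiv.tsum_eq]
  simp only [one_sub_tvar_pow_segG_mul_zmon_negwtG]
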